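/- Let A = [[A11,A12],[A21,A22]] be an n×n complex block matrix with block sizes n1, n2 ≥ 2. If the quadratic numerical range W²(A) equals the two-point set {λ1, λ2}, then (up to swapping λ1 and λ2) A11 = λ1·I, A22 = λ2·I, and at least one of A12, A21 is the zero matrix. -/

import Mathlib

/-!
If `x₂` is a unit vector orthogonal to `A₂₁ x₁`, the compression `[[x₁*A₁₁x₁, ·], [0, x₂*A₂₂x₂]]`
is triangular, so `W(A₁₁) ⊆ W²(A) = {λ₁, λ₂}`. Since `W(A₁₁)` is connected (the unit sphere is),
it is a single point `μ₁`, and a complex matrix is determined by its quadratic form, so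
`A₁₁ = μ₁ I`; likewise `A₂₂ = μ₂ I`. Now every eigenvalue of `[[μ₁, b], [c, μ₂]]` with
`b = x₁*A₁₂x₂`, `c = x₂*A₂₁x₁` lies in `{λ₁, λ₂}`, which contains `μ₁, μ₂`; this forces `bc = 0`.
As no group is the union of two proper subgroups, one of the forms `(x₁, x₂) ↦ b`, `↦ c`
vanishes identically. Then `W²(A) = {μ₁, μ₂}`, which must be `{λ₁, λ₂}`.
-/

open Matrix

noncomputable section

/-- The quadratic numerical range of a 2×2 block matrix, given by its blocks. -/
def quadRange {n1 n2 : ℕ} (A11 : Matrix (Fin n1) (Fin n1) ℂ)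
    (A12 : Matrix (Fin n1) (Fin n2) ℂ) (A21 : Matrix (Fin n2) (Fin n1) ℂ)
    (A22 : Matrix (Fin n2) (Fin n2) ℂ) : Set ℂ :=
  {z | ∃ x1 : Fin n1 → ℂ, ∃ x2 : Fin n2 → ℂ,
    star x1 ⬝ᵥ x1 = 1 ∧ star x2 ⬝ᵥ x2 = 1 ∧
    z ∈ spectrum ℂ (!![star x1 ⬝ᵥ A11.mulVec x1, star x1 ⬝ᵥ A12.mulVec x2;
                       star x2 ⬝ᵥ A21.mulVec x1, star x2 ⬝ᵥ A22.mulVec x2])}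

section UnitVectors

variable {ι : Type*} [Fintype ι]

lemma star_dotProduct_self_eq_norm_sq (x : ι → ℂ) :
    star x ⬝ᵥ x = (‖WithLp.toLp 2 x‖ : ℂ) ^ 2 := by
  rw [dotProduct_comm, ← EuclideanSpace.inner_toLp_toLp]
  exact inner_self_eq_norm_sq_to_K (𝕜 := ℂ) _

lemma star_dotProduct_self_eq_one_iff {x : ι → ℂ} :
    star x ⬝ᵥ x = 1 ↔ ‖WithLp.toLp 2 x‖ = 1 := by
  rw [star_dotProduct_self_eq_norm_sq]
  norm_cast
  exact pow_eq_one_iff_of_nonneg (norm_nonneg _) two_ne_zero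

lemma image_ofLp_sphere :
    WithLp.ofLp '' Metric.sphere (0 : EuclideanSpace ℂ ι) 1 = {x | star x ⬝ᵥ x = 1} := by
  ext x
  simp only [Set.mem_ofPred_eq, star_dotProduct_self_eq_one_iff]
  exact ⟨fun ⟨u, hu, hux⟩ => hux ▸ by simpa using hu, fun hx => ⟨_, by simpa using hx, rfl⟩⟩

lemma isConnected_setOf_star_dotProduct_self_eq_one [Nonempty ι] :
    IsConnected {x : ι → ℂ | star x ⬝ᵥ x = 1} := by
  rw [← image_ofLp_sphere]
  refine (isConnected_sphere ?_ 0 zero_le_one).image _ (PiLp.continuous_ofLp 2 _).continuousOn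
  rw [← Module.finrank_eq_rank, finrank_real_of_complex, finrank_euclideanSpace]
  exact_mod_cast (by linarith [Fintype.card_pos (α := ι)] : 1 < 2 * Fintype.card ι)

lemma exists_smul_star_dotProduct_self_eq_one {x : ι → ℂ} (hx : x ≠ 0) :
    ∃ c : ℂ, c ≠ 0 ∧ star (c • x) ⬝ᵥ (c • x) = 1 := by
  have hnorm : (‖WithLp.toLp 2 x‖ : ℂ) ≠ 0 := by simpa using hx
  refine ⟨(‖WithLp.toLp 2 x‖ : ℂ)⁻¹, inv_ne_zero hnorm, ?_⟩
  rw [star_smul, smul_dotProduct, dotProduct_smul, star_dotProduct_self_eq_norm_sq]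
  simp only [smul_eq_mul, star_inv₀, Complex.star_def, Complex.conj_ofReal]
  field_simp

lemma forall_of_forall_star_dotProduct_self_eq_one {P : (ι → ℂ) → Prop} (h0 : P 0)
    (hsmul : ∀ c : ℂ, c ≠ 0 → ∀ x, P (c • x) → P x)
    (h : ∀ x, star x ⬝ᵥ x = 1 → P x) (x : ι → ℂ) : P x := by
  obtain rfl | hx := eq_or_ne x 0
  · exact h0
  obtain ⟨c, hc, hcx⟩ := exists_smul_star_dotProduct_self_eq_one hx
  exact hsmul c hc x (h _ hcx)

lemma exists_star_dotProduct_self_eq_one_and_star_dotProduct_eq_zero [Nontrivial ι]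
    (v : ι → ℂ) : ∃ u : ι → ℂ, star u ⬝ᵥ u = 1 ∧ star u ⬝ᵥ v = 0 := by
  have hker : LinearMap.ker (dotProductBilin ℂ ℂ (star v)) ≠ ⊥ :=
    LinearMap.ker_ne_bot_of_finrank_lt (by simpa using Fintype.one_lt_card)
  obtain ⟨w, hw, hw0⟩ := Submodule.exists_mem_ne_zero_of_ne_bot hker
  obtain ⟨c, -, hcw⟩ := exists_smul_star_dotProduct_self_eq_one hw0
  refine ⟨c • w, hcw, ?_⟩
  rw [LinearMap.mem_ker, dotProductBilin_apply_apply] at hw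
  rw [star_smul, smul_dotProduct, ← star_star v, star_dotProduct_star, hw, star_zero, smul_zero]

end UnitVectors

lemma AddMonoidHom.eq_zero_or_eq_zero_of_forall {G M N : Type*} [AddGroup G] [AddZeroClass M]
    [AddZeroClass N] (f : G →+ M) (g : G →+ N) (h : ∀ x, f x = 0 ∨ g x = 0) : f = 0 ∨ g = 0 := by
  have := (AddSubgroupClass.subset_union (H := (⊤ : AddSubgroup G)) (K := f.ker) (L := g.ker)).1
    fun x _ => h x
  simpa [top_le_iff, AddMonoidHom.ker_eq_top_iff] using this

namespace Matrix

variable {ι : Type*} [Fintype ι]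

lemma eq_zero_of_forall_star_dotProduct_mulVec_eq_zero {κ : Type*} [Fintype κ]
    {A : Matrix ι κ ℂ} (h : ∀ x y, star x ⬝ᵥ A *ᵥ y = 0) : A = 0 := by
  classical
  ext i j
  simpa using h (Pi.single i 1) (Pi.single j 1)

lemma eq_zero_of_forall_star_dotProduct_mulVec_self_eq_zero {A : Matrix ι ι ℂ}
    (h : ∀ x, star x ⬝ᵥ A *ᵥ x = 0) : A = 0 := by
  classical
  rw [← map_eq_zero_iff _ (toEuclideanLin (m := ι) (n := ι) (𝕜 := ℂ)).injective,
    ← inner_map_self_eq_zero]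
  intro x
  rw [EuclideanSpace.inner_eq_star_dotProduct, ofLp_toLpLin, toLin'_apply, dotProduct_comm,
    ← star_star x.ofLp, star_dotProduct_star, star_star, h, star_zero]

lemma eq_smul_one_of_forall_star_dotProduct_mulVec_eq [DecidableEq ι] {A : Matrix ι ι ℂ}
    {μ : ℂ} (h : ∀ x, star x ⬝ᵥ x = 1 → star x ⬝ᵥ A *ᵥ x = μ) : A = μ • 1 := by
  rw [← sub_eq_zero]
  refine eq_zero_of_forall_star_dotProduct_mulVec_self_eq_zero
    (forall_of_forall_star_dotProduct_self_eq_one (by simp) (fun c hc x hcx => ?_) fun x hx => ?_)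
  · simpa [star_smul, smul_dotProduct, mulVec_smul, dotProduct_smul, hc] using hcx
  · rw [sub_mulVec, dotProduct_sub, h x hx, smul_mulVec, one_mulVec, dotProduct_smul, hx]
    simp

lemma star_dotProduct_smul_one_mulVec [DecidableEq ι] {x : ι → ℂ} (hx : star x ⬝ᵥ x = 1)
    (μ : ℂ) : star x ⬝ᵥ (μ • 1 : Matrix ι ι ℂ) *ᵥ x = μ := by
  rw [smul_mulVec, one_mulVec, dotProduct_smul, hx, smul_eq_mul, mul_one]

lemma exists_mem_eq_smul_one_of_star_dotProduct_mulVec_mem [Nonempty ι] [DecidableEq ι]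
    {A : Matrix ι ι ℂ} {T : Set ℂ} (hT : T.Finite)
    (h : ∀ x, star x ⬝ᵥ x = 1 → star x ⬝ᵥ A *ᵥ x ∈ T) : ∃ μ ∈ T, A = μ • 1 := by
  have hS := isConnected_setOf_star_dotProduct_self_eq_one (ι := ι)
  obtain ⟨x₀, hx₀⟩ := hS.nonempty
  obtain ⟨μ, hμ, hconst⟩ :=
    hS.isPreconnected.eqOn_const_of_mapsTo hT.isDiscrete (by fun_prop) h ⟨_, h x₀ hx₀⟩
  exact ⟨μ, hμ, eq_smul_one_of_forall_star_dotProduct_mulVec_eq hconst⟩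

lemma eq_zero_or_eq_zero_of_forall_mul_eq_zero {κ : Type*} [Fintype κ] {B : Matrix ι κ ℂ}
    {C : Matrix κ ι ℂ} (h : ∀ x y, (star x ⬝ᵥ B *ᵥ y) * (star y ⬝ᵥ C *ᵥ x) = 0) :
    B = 0 ∨ C = 0 := by
  have hinner : ∀ x, (∀ y, star x ⬝ᵥ B *ᵥ y = 0) ∨ (∀ y, star y ⬝ᵥ C *ᵥ x = 0) := by
    intro x
    have := AddMonoidHom.eq_zero_or_eq_zero_of_forall
      (AddMonoidHom.mk' (fun y => star x ⬝ᵥ B *ᵥ y) fun _ _ => by simp [mulVec_add])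
      (AddMonoidHom.mk' (fun y => star y ⬝ᵥ C *ᵥ x) fun _ _ => by simp [add_dotProduct])
      fun y => mul_eq_zero.1 (h x y)
    simpa [DFunLike.ext_iff] using this
  have := AddMonoidHom.eq_zero_or_eq_zero_of_forall
    (AddMonoidHom.mk' (fun x y => star x ⬝ᵥ B *ᵥ y) fun _ _ => by ext; simp [add_dotProduct])
    (AddMonoidHom.mk' (fun x y => star y ⬝ᵥ C *ᵥ x) fun _ _ => by ext; simp [mulVec_add])
    fun x => by simpa [funext_iff] using hinner x
  simp only [DFunLike.ext_iff, funext_iff] at this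
  exact this.imp (fun h => eq_zero_of_forall_star_dotProduct_mulVec_eq_zero h)
    fun h => eq_zero_of_forall_star_dotProduct_mulVec_eq_zero fun y x => h x y

end Matrix

lemma mem_spectrum_fin_two_iff {K : Type*} [Field K] {a b c d z : K} :
    z ∈ spectrum K !![a, b; c, d] ↔ (z - a) * (z - d) - b * c = 0 := by
  rw [mem_spectrum_iff_isRoot_charpoly, charpoly_fin_two, trace_fin_two_of, det_fin_two_of]
  simp only [Polynomial.IsRoot.def, Polynomial.eval_add, Polynomial.eval_sub, Polynomial.eval_pow,
    Polynomial.eval_mul, Polynomial.eval_X, Polynomial.eval_C]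
  constructor <;> intro h <;> linear_combination h

lemma eq_zero_of_roots_mem_pair {l₁ l₂ μ ν p : ℂ} (hμ : μ = l₁ ∨ μ = l₂) (hν : ν = l₁ ∨ ν = l₂)
    (hroots : ∀ z, (z - μ) * (z - ν) - p = 0 → z = l₁ ∨ z = l₂) : p = 0 := by
  obtain ⟨r, hr⟩ := IsAlgClosed.exists_pow_nat_eq ((μ - ν) ^ 2 + 4 * p) two_pos
  -- The roots `(μ + ν ± r) / 2` have sum `μ + ν` and product `μ * ν - p`; as all four numbers
  -- lie in `{l₁, l₂}`, this forces `p = 0`.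
  have hplus := hroots ((μ + ν + r) / 2) (by linear_combination hr / 4)
  have hminus := hroots ((μ + ν - r) / 2) (by linear_combination hr / 4)
  grind

section QuadRange

variable {n₁ n₂ : ℕ} {A₁₁ : Matrix (Fin n₁) (Fin n₁) ℂ} {A₁₂ : Matrix (Fin n₁) (Fin n₂) ℂ}
  {A₂₁ : Matrix (Fin n₂) (Fin n₁) ℂ} {A₂₂ : Matrix (Fin n₂) (Fin n₂) ℂ} {z : ℂ}

lemma mem_quadRange_iff : z ∈ quadRange A₁₁ A₁₂ A₂₁ A₂₂ ↔
    ∃ x₁ x₂, star x₁ ⬝ᵥ x₁ = 1 ∧ star x₂ ⬝ᵥ x₂ = 1 ∧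
      (z - star x₁ ⬝ᵥ A₁₁ *ᵥ x₁) * (z - star x₂ ⬝ᵥ A₂₂ *ᵥ x₂) -
        (star x₁ ⬝ᵥ A₁₂ *ᵥ x₂) * (star x₂ ⬝ᵥ A₂₁ *ᵥ x₁) = 0 := by
  simp only [quadRange, Set.mem_ofPred_eq, mem_spectrum_fin_two_iff]

lemma quadRange_swap : quadRange A₂₂ A₂₁ A₁₂ A₁₁ = quadRange A₁₁ A₁₂ A₂₁ A₂₂ := by
  ext z
  simp only [mem_quadRange_iff]
  rw [exists_comm]
  refine exists₂_congr fun x₂ x₁ => ?_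
  rw [and_left_comm, mul_comm (z - _), mul_comm (_ ⬝ᵥ A₂₁ *ᵥ _)]

lemma star_dotProduct_mulVec_mem_quadRange [Nontrivial (Fin n₂)] {x : Fin n₁ → ℂ}
    (hx : star x ⬝ᵥ x = 1) : star x ⬝ᵥ A₁₁ *ᵥ x ∈ quadRange A₁₁ A₁₂ A₂₁ A₂₂ := by
  obtain ⟨y, hy, hyx⟩ := exists_star_dotProduct_self_eq_one_and_star_dotProduct_eq_zero (A₂₁ *ᵥ x)
  exact mem_quadRange_iff.2 ⟨x, y, hx, hy, by rw [hyx]; ring⟩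

lemma quadRange_smul_one_of_eq_zero_or_eq_zero [NeZero n₁] [NeZero n₂] {μ₁ μ₂ : ℂ}
    (h : A₁₂ = 0 ∨ A₂₁ = 0) : quadRange (μ₁ • 1) A₁₂ A₂₁ (μ₂ • 1) = {μ₁, μ₂} := by
  have hoff : ∀ x₁ x₂, (star x₁ ⬝ᵥ A₁₂ *ᵥ x₂) * (star x₂ ⬝ᵥ A₂₁ *ᵥ x₁) = 0 := by
    rcases h with rfl | rfl <;> simp
  have hunit {n : ℕ} [NeZero n] : star (Pi.single 0 1 : Fin n → ℂ) ⬝ᵥ Pi.single 0 1 = 1 := by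
    simp
  ext z
  simp only [mem_quadRange_iff, hoff, sub_zero, Set.mem_insert_iff, Set.mem_singleton_iff]
  constructor
  · rintro ⟨x₁, x₂, h₁, h₂, hz⟩
    rw [star_dotProduct_smul_one_mulVec h₁, star_dotProduct_smul_one_mulVec h₂] at hz
    simpa [sub_eq_zero] using hz
  · rintro (rfl | rfl) <;> exact ⟨_, _, hunit, hunit, by simp⟩

lemma eq_zero_or_eq_zero_of_quadRange_subset_pair {μ₁ μ₂ l₁ l₂ : ℂ} (hμ₁ : μ₁ = l₁ ∨ μ₁ = l₂)
    (hμ₂ : μ₂ = l₁ ∨ μ₂ = l₂) (h : quadRange (μ₁ • 1) A₁₂ A₂₁ (μ₂ • 1) ⊆ {l₁, l₂}) :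
    A₁₂ = 0 ∨ A₂₁ = 0 := by
  have hunit : ∀ x₁ x₂, star x₁ ⬝ᵥ x₁ = 1 → star x₂ ⬝ᵥ x₂ = 1 →
      (star x₁ ⬝ᵥ A₁₂ *ᵥ x₂) * (star x₂ ⬝ᵥ A₂₁ *ᵥ x₁) = 0 := fun x₁ x₂ h₁ h₂ =>
    eq_zero_of_roots_mem_pair hμ₁ hμ₂ fun z hz => h <| mem_quadRange_iff.2
      ⟨x₁, x₂, h₁, h₂, by rwa [star_dotProduct_smul_one_mulVec h₁,
        star_dotProduct_smul_one_mulVec h₂]⟩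
  have hall : ∀ x₁ x₂, (star x₁ ⬝ᵥ A₁₂ *ᵥ x₂) * (star x₂ ⬝ᵥ A₂₁ *ᵥ x₁) = 0 := by
    refine forall_of_forall_star_dotProduct_self_eq_one (by simp) (fun c hc x₁ hx₁ x₂ => ?_)
      fun x₁ h₁ => forall_of_forall_star_dotProduct_self_eq_one (by simp)
        (fun c hc x₂ hx₂ => ?_) (hunit x₁ · h₁)
    · simpa [star_smul, smul_dotProduct, mulVec_smul, dotProduct_smul, hc] using hx₁ x₂
    · simpa [star_smul, smul_dotProduct, mulVec_smul, dotProduct_smul, hc] using hx₂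
  exact eq_zero_or_eq_zero_of_forall_mul_eq_zero hall

end QuadRange

/-- If the quadratic numerical range of a block matrix with block sizes ≥ 2 is the
two-point set {λ₁, λ₂}, then (up to swapping λ₁, λ₂) the diagonal blocks are the
corresponding scalar matrices and one of the off-diagonal blocks is zero. -/
theorem stmt7 {n1 n2 : ℕ} (hn1 : 2 ≤ n1) (hn2 : 2 ≤ n2) (lam1 lam2 : ℂ)
    (A11 : Matrix (Fin n1) (Fin n1) ℂ) (A12 : Matrix (Fin n1) (Fin n2) ℂ)
    (A21 : Matrix (Fin n2) (Fin n1) ℂ) (A22 : Matrix (Fin n2) (Fin n2) ℂ)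
    (hW2 : quadRange A11 A12 A21 A22 = {lam1, lam2}) :
    ((A11 = lam1 • (1 : Matrix (Fin n1) (Fin n1) ℂ) ∧
      A22 = lam2 • (1 : Matrix (Fin n2) (Fin n2) ℂ)) ∨
     (A11 = lam2 • (1 : Matrix (Fin n1) (Fin n1) ℂ) ∧
      A22 = lam1 • (1 : Matrix (Fin n2) (Fin n2) ℂ))) ∧
    (A12 = 0 ∨ A21 = 0) := by
  have : Nontrivial (Fin n1) := Fin.nontrivial_iff_two_le.2 hn1
  have : Nontrivial (Fin n2) := Fin.nontrivial_iff_two_le.2 hn2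
  have : NeZero n1 := ⟨by omega⟩
  have : NeZero n2 := ⟨by omega⟩
  have hfin : ({lam1, lam2} : Set ℂ).Finite := Set.toFinite _
  obtain ⟨μ₁, hμ₁, rfl⟩ := exists_mem_eq_smul_one_of_star_dotProduct_mulVec_mem hfin
    fun x hx => hW2 ▸ star_dotProduct_mulVec_mem_quadRange hx
  obtain ⟨μ₂, hμ₂, rfl⟩ := exists_mem_eq_smul_one_of_star_dotProduct_mulVec_mem hfin
    fun x hx => hW2 ▸ quadRange_swap ▸ star_dotProduct_mulVec_mem_quadRange hx
  have hoff := eq_zero_or_eq_zero_of_quadRange_subset_pair hμ₁ hμ₂ hW2.subset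
  rw [quadRange_smul_one_of_eq_zero_or_eq_zero hoff, Set.pair_eq_pair_iff] at hW2
  exact ⟨by rcases hW2 with ⟨rfl, rfl⟩ | ⟨rfl, rfl⟩ <;> simp, hoff⟩
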